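/- arXiv:1901.04810 — 2 statements merged into one kernel-verified Lean document; each statement's English description precedes it below -/
import Mathlib

section
/- Let ν ∈ ℂ be a primitive cube root of unity, and let r, s ∈ ℂ[x₀,x₁] be homogeneous of degrees 2 and 3 respectively, having no common zero in ℂ² ∖ {(0,0)}. Then there is no nonzero x = (x₀,x₁,x₂,x₃) ∈ ℂ⁴ with F₁(x) = F₂(x) = 0 and (x₀, x₁, νx₂, ν²x₃) = λ·x for some λ ∈ ℂ. In other words, the order-3 automorphism of the curve C₄ ⊂ ℙ³(ℂ) induced by ξ acts without fixed points (freely). -/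
lemma eval_zero_of_homog {n : ℕ} (p : MvPolynomial (Fin 2) ℂ)
    (hp : p.IsHomogeneous n) (hn : n ≠ 0) :
    MvPolynomial.eval ![(0:ℂ), 0] p = 0 := by
  have h0 : ![(0:ℂ), 0] = 0 := by
    funext i; fin_cases i <;> rfl
  rw [h0, show MvPolynomial.eval (0 : Fin 2 → ℂ) p = MvPolynomial.coeff 0 p by
    simp [MvPolynomial.eval_zero, MvPolynomial.constantCoeff_eq]]
  exact hp.coeff_eq_zero (by simpa using fun h => hn h.symm)

/-- Let ν be a primitive cube root of unity and r, s ∈ ℂ[x₀,x₁]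
homogeneous of degrees 2 and 3 with no common zero in ℂ² ∖ {(0,0)}.  Then there is no
nonzero x = (x₀,x₁,x₂,x₃) ∈ ℂ⁴ with F₁(x) = F₂(x) = 0 and (x₀,x₁,νx₂,ν²x₃) = λ·x for
some λ ∈ ℂ: the order-3 automorphism of the curve C₄ ⊂ ℙ³(ℂ) induced by ξ acts freely. -/
theorem stmt4 (ν : ℂ) (hν : ν ^ 3 = 1) (hν1 : ν ≠ 1)
    (r s : MvPolynomial (Fin 2) ℂ)
    (hr : r.IsHomogeneous 2) (hs : s.IsHomogeneous 3)
    (hrs : ∀ a b : ℂ, MvPolynomial.eval ![a, b] r = 0 → MvPolynomial.eval ![a, b] s = 0 →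
      a = 0 ∧ b = 0) :
    ¬ ∃ (x₀ x₁ x₂ x₃ l : ℂ), ¬(x₀ = 0 ∧ x₁ = 0 ∧ x₂ = 0 ∧ x₃ = 0) ∧
      MvPolynomial.eval ![x₀, x₁] r + x₂ * x₃ = 0 ∧
      MvPolynomial.eval ![x₀, x₁] s + x₂ ^ 3 + x₃ ^ 3 = 0 ∧
      (x₀, x₁, ν * x₂, ν ^ 2 * x₃) = (l * x₀, l * x₁, l * x₂, l * x₃) := by
  rintro ⟨x₀, x₁, x₂, x₃, l, hne, hF1, hF2, heq⟩
  obtain ⟨h0, h1, h2, h3⟩ : x₀ = l * x₀ ∧ x₁ = l * x₁ ∧ ν * x₂ = l * x₂ ∧ ν ^ 2 * x₃ = l * x₃ := by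
    simpa [Prod.ext_iff] using heq
  have hν2 : ν ^ 2 ≠ 1 := by
    intro h
    apply hν1
    have : ν * ν ^ 2 = 1 := by rw [← hν]; ring
    rw [h, mul_one] at this; exact this
  by_cases hl : l = 1
  · subst hl
    rw [one_mul] at h2 h3
    have hx2 : x₂ = 0 := by
      rcases mul_eq_mul_right_iff.mp (h2.trans (one_mul x₂).symm) with h | h
      · exact absurd h hν1
      · exact h
    have hx3 : x₃ = 0 := by
      rcases mul_eq_mul_right_iff.mp (h3.trans (one_mul x₃).symm) with h | h
      · exact absurd h hν2
      · exact h
    subst hx2; subst hx3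
    have hF1' : MvPolynomial.eval ![x₀, x₁] r = 0 := by linear_combination hF1
    have hF2' : MvPolynomial.eval ![x₀, x₁] s = 0 := by linear_combination hF2
    obtain ⟨hx0, hx1⟩ := hrs x₀ x₁ hF1' hF2'
    exact hne ⟨hx0, hx1, rfl, rfl⟩
  · have hx0 : x₀ = 0 := by
      rcases mul_eq_mul_right_iff.mp ((one_mul x₀).trans h0) with h | h
      · exact absurd h.symm hl
      · exact h
    have hx1 : x₁ = 0 := by
      rcases mul_eq_mul_right_iff.mp ((one_mul x₁).trans h1) with h | h
      · exact absurd h.symm hl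
      · exact h
    subst hx0; subst hx1
    rw [eval_zero_of_homog r hr (by norm_num)] at hF1
    rw [eval_zero_of_homog s hs (by norm_num)] at hF2
    have h23 : x₂ * x₃ = 0 := by linear_combination hF1
    have hx2 : x₂ = 0 ∧ x₃ = 0 := by
      rcases mul_eq_zero.mp h23 with h | h
      · subst h
        refine ⟨rfl, ?_⟩
        have : x₃ ^ 3 = 0 := by linear_combination hF2
        exact pow_eq_zero_iff (by norm_num) |>.mp this
      · subst h
        refine ⟨?_, rfl⟩
        have : x₂ ^ 3 = 0 := by linear_combination hF2
        exact pow_eq_zero_iff (by norm_num) |>.mp this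
    exact hne ⟨rfl, rfl, hx2.1, hx2.2⟩
end

section
/- Let V and M be vector spaces over ℚ, let m > n ≥ 1 be integers, and suppose V = U₁ ⊕ ⋯ ⊕ Uₙ is a direct sum of subspaces. Let F : V^m → M be an m-multilinear map with the following property: for each k ∈ {1,…,n} and each pair of distinct positions i ≠ j in {1,…,m}, the value of F is unchanged when its i-th and j-th arguments are exchanged, provided both of these arguments lie in the subspace U_k (the other arguments being arbitrary elements of V). Then the full alternation of F vanishes: for all v₁, …, v_m ∈ V, ∑_{σ ∈ 𝔖_m} sgn(σ) · F(v_{σ(1)}, …, v_{σ(m)}) = 0. -/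
lemma exists_components (V : Type*) [AddCommGroup V] [Module ℚ V]
    (n : ℕ) (U : Fin n → Submodule ℚ V) (htop : ⨆ k, U k = ⊤) (x : V) :
    ∃ c : Fin n → V, (∀ k, c k ∈ U k) ∧ ∑ k, c k = x := by
  let S : Submodule ℚ V :=
    { carrier := {x | ∃ c : Fin n → V, (∀ k, c k ∈ U k) ∧ ∑ k, c k = x}
      add_mem' := by
        rintro a b ⟨c, hc, rfl⟩ ⟨d, hd, rfl⟩
        exact ⟨c + d, fun k => (U k).add_mem (hc k) (hd k), by
          simp [Finset.sum_add_distrib]⟩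
      zero_mem' := ⟨0, fun k => (U k).zero_mem, by simp⟩
      smul_mem' := by
        rintro q a ⟨c, hc, rfl⟩
        exact ⟨q • c, fun k => (U k).smul_mem q (hc k), by
          simp [Finset.smul_sum]⟩ }
  have hUS : ∀ k, U k ≤ S := by
    intro k y hy
    refine ⟨fun l => if l = k then y else 0, fun l => ?_, by simp⟩
    by_cases h : l = k <;> simp [h, hy, (U l).zero_mem]
  have : x ∈ S := by
    have : (⊤ : Submodule ℚ V) ≤ S := htop ▸ iSup_le hUS
    exact this trivial
  exact this

/-- Let V and M be ℚ-vector spaces, let m > n ≥ 1 be integers, and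
suppose V = U₁ ⊕ ⋯ ⊕ Uₙ is an (internal) direct sum of subspaces.  Let
F : V^m → M be an m-multilinear map such that for each k ∈ {1,…,n} and each pair of
distinct positions i ≠ j in {1,…,m}, the value of F is unchanged when its i-th and
j-th arguments are exchanged, provided both of these arguments lie in Uₖ.  Then the
full alternation of F vanishes:
∑_{σ ∈ 𝔖_m} sgn(σ) · F(v_{σ(1)}, …, v_{σ(m)}) = 0 for all v₁, …, v_m ∈ V. -/
theorem stmt11 (V M : Type*) [AddCommGroup V] [Module ℚ V]
    [AddCommGroup M] [Module ℚ M]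
    (m n : ℕ) (hn : 1 ≤ n) (hmn : n < m)
    (U : Fin n → Submodule ℚ V) (hU : DirectSum.IsInternal U)
    (F : MultilinearMap ℚ (fun _ : Fin m => V) M)
    (hsym : ∀ (k : Fin n) (i j : Fin m), i ≠ j → ∀ v : Fin m → V,
      v i ∈ U k → v j ∈ U k → F (fun p => v (Equiv.swap i j p)) = F v) :
    ∀ v : Fin m → V,
      ∑ σ : Equiv.Perm (Fin m), (Equiv.Perm.sign σ : ℤ) • F (fun i => v (σ i)) = 0 := by
  intro v
  -- the alternation as a single multilinear map
  set G : MultilinearMap ℚ (fun _ : Fin m => V) M :=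
    ∑ σ : Equiv.Perm (Fin m), (Equiv.Perm.sign σ : ℤ) • F.domDomCongr σ with hG
  have hGapp : ∀ w : Fin m → V,
      G w = ∑ σ : Equiv.Perm (Fin m), (Equiv.Perm.sign σ : ℤ) • F (fun i => w (σ i)) := by
    intro w
    simp [hG, MultilinearMap.sum_apply, MultilinearMap.domDomCongr_apply]
  -- key vanishing lemma: if two arguments lie in the same Uₖ, the alternation vanishes
  have key : ∀ (w : Fin m → V) (k : Fin n) (i j : Fin m), i ≠ j →
      w i ∈ U k → w j ∈ U k → G w = 0 := by
    intro w k i j hij hwi hwj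
    have hswap : ∀ σ : Equiv.Perm (Fin m),
        F (fun p => w ((Equiv.swap i j * σ) p)) = F (fun p => w (σ p)) := by
      intro σ
      have hij' : σ⁻¹ i ≠ σ⁻¹ j := fun h => hij (by simpa using congrArg σ h)
      have h := hsym k (σ⁻¹ i) (σ⁻¹ j) hij' (fun p => w (σ p))
        (by simpa using hwi) (by simpa using hwj)
      have hc : Equiv.swap i j * σ = σ * Equiv.swap (σ⁻¹ i) (σ⁻¹ j) :=
        Equiv.swap_mul_eq_mul_swap σ i j
      rw [hc]
      simpa [Equiv.Perm.mul_apply] using h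
    have hterm : ∀ σ : Equiv.Perm (Fin m),
        ((Equiv.Perm.sign (Equiv.swap i j * σ) : ℤ) •
          F (fun p => w ((Equiv.swap i j * σ) p)))
        = -((Equiv.Perm.sign σ : ℤ) • F (fun p => w (σ p))) := by
      intro σ
      rw [hswap σ, Equiv.Perm.sign_mul, Equiv.Perm.sign_swap hij]
      simp [neg_smul]
    have hre : G w = -(G w) := by
      calc G w = ∑ σ : Equiv.Perm (Fin m),
            (Equiv.Perm.sign (Equiv.swap i j * σ) : ℤ) •
              F (fun p => w ((Equiv.swap i j * σ) p)) := by
            rw [hGapp]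
            exact (Equiv.sum_comp (Equiv.mulLeft (Equiv.swap i j)) (fun σ =>
              (Equiv.Perm.sign σ : ℤ) • F (fun p => w (σ p)))).symm
        _ = ∑ σ : Equiv.Perm (Fin m),
              -((Equiv.Perm.sign σ : ℤ) • F (fun p => w (σ p))) :=
            Finset.sum_congr rfl (fun σ _ => hterm σ)
        _ = -(G w) := by rw [Finset.sum_neg_distrib, ← hGapp]
    have h2 : (2 : ℚ) • G w = 0 := by
      rw [two_smul]
      nth_rewrite 1 [hre]
      simp
    have := smul_eq_zero.mp h2
    simpa using this.resolve_left (by norm_num)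
  -- decompose each argument
  have htop : ⨆ k, U k = ⊤ := hU.submodule_iSup_eq_top
  choose c hc hcsum using fun i => exists_components V n U htop (v i)
  have hv : v = fun i => ∑ k, c i k := by funext i; rw [hcsum]
  rw [← hGapp v, hv, G.map_sum]
  refine Finset.sum_eq_zero fun f _ => ?_
  obtain ⟨i, j, hij, hfij⟩ := Fintype.exists_ne_map_eq_of_card_lt f (by simpa using hmn)
  exact key _ (f i) i j hij (hc i (f i)) (hfij ▸ hc j (f j))
end
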